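/- arXiv:2310.03722 — 7 statements merged into one kernel-verified Lean document; each statement's English description precedes it below -/
import Mathlib

section
/- Let X ~ N(μ, σ²) for real μ and σ > 0. Then E[|X - μ| · exp((1 - X²)/2)] ≤ 1. That is, the random variable |X - μ|·exp((1-X²)/2) is an e-value for the class of normal distributions with mean μ. -/
open MeasureTheory ProbabilityTheory

lemma aux_le_exp (t : ℝ) : t ≤ Real.exp ((t ^ 2 - 1) / 2) := by
  calc t ≤ Real.exp (t - 1) := by
        have := Real.add_one_le_exp (t - 1)
        linarith
    _ ≤ Real.exp ((t ^ 2 - 1) / 2) := by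
        apply Real.exp_le_exp.mpr
        nlinarith [sq_nonneg (t - 1)]

lemma pointwise_bound (μ σ : ℝ) (hσ : 0 < σ) (x : ℝ) :
    gaussianPDFReal μ (Real.toNNReal (σ ^ 2)) x * (|x - μ| * Real.exp ((1 - x ^ 2) / 2))
      ≤ gaussianPDFReal 0 1 x := by
  have hv : ((Real.toNNReal (σ ^ 2)) : ℝ) = σ ^ 2 := Real.coe_toNNReal _ (by positivity)
  rw [gaussianPDFReal, gaussianPDFReal, hv]
  push_cast
  have hσ' : σ ≠ 0 := ne_of_gt hσ
  have habs : |x - μ| ≤ σ * Real.exp (((x - μ) ^ 2 / σ ^ 2 - 1) / 2) := by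
    have h := aux_le_exp (|x - μ| / σ)
    have h2 : (|x - μ| / σ) ^ 2 = (x - μ) ^ 2 / σ ^ 2 := by
      rw [div_pow, sq_abs]
    rw [h2] at h
    calc |x - μ| = σ * (|x - μ| / σ) := by field_simp
      _ ≤ σ * Real.exp (((x - μ) ^ 2 / σ ^ 2 - 1) / 2) := by
          exact mul_le_mul_of_nonneg_left h hσ.le
  have hsqrt : Real.sqrt (2 * Real.pi * σ ^ 2) = Real.sqrt (2 * Real.pi) * σ := by
    rw [Real.sqrt_mul (by positivity), Real.sqrt_sq hσ.le]
  have hpos : (0:ℝ) < Real.sqrt (2 * Real.pi) := Real.sqrt_pos.mpr (by positivity)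
  calc (Real.sqrt (2 * Real.pi * σ ^ 2))⁻¹ * Real.exp (-(x - μ) ^ 2 / (2 * σ ^ 2)) *
        (|x - μ| * Real.exp ((1 - x ^ 2) / 2))
      ≤ (Real.sqrt (2 * Real.pi) * σ)⁻¹ * Real.exp (-(x - μ) ^ 2 / (2 * σ ^ 2)) *
        ((σ * Real.exp (((x - μ) ^ 2 / σ ^ 2 - 1) / 2)) * Real.exp ((1 - x ^ 2) / 2)) := by
        rw [hsqrt]
        apply mul_le_mul_of_nonneg_left _ (by positivity)
        exact mul_le_mul_of_nonneg_right habs (Real.exp_pos _).le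
    _ = (Real.sqrt (2 * Real.pi))⁻¹ * Real.exp (-(x - μ) ^ 2 / (2 * σ ^ 2) +
          (((x - μ) ^ 2 / σ ^ 2 - 1) / 2 + (1 - x ^ 2) / 2)) := by
        rw [Real.exp_add, Real.exp_add, mul_inv]
        field_simp
    _ = (Real.sqrt (2 * Real.pi * 1))⁻¹ * Real.exp (-(x - 0) ^ 2 / (2 * 1)) := by
        rw [mul_one]
        congr 1
        · congr 1
          field_simp
          ring
    _ ≤ (Real.sqrt (2 * Real.pi * 1))⁻¹ * Real.exp (-(x - 0) ^ 2 / (2 * 1)) := le_refl _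

theorem stmt_1 (μ σ : ℝ) (hσ : 0 < σ) :
    ∫ x, |x - μ| * Real.exp ((1 - x ^ 2) / 2)
        ∂(gaussianReal μ (Real.toNNReal (σ ^ 2))) ≤ 1 := by
  set v : NNReal := Real.toNNReal (σ ^ 2) with hvdef
  have hv0 : v ≠ 0 := by
    simp [hvdef, Real.toNNReal_eq_zero, not_le]
    positivity
  rw [gaussianReal_of_var_ne_zero _ hv0]
  have hmeas : Measurable (fun x => (gaussianPDFReal μ v x).toNNReal) :=
    (measurable_gaussianPDFReal μ v).real_toNNReal
  have hwd : (volume.withDensity (gaussianPDF μ v)) =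
      volume.withDensity (fun x => ((gaussianPDFReal μ v x).toNNReal : ENNReal)) := rfl
  rw [hwd, integral_withDensity_eq_integral_smul hmeas]
  have hle : ∀ x, (gaussianPDFReal μ v x).toNNReal •
      (|x - μ| * Real.exp ((1 - x ^ 2) / 2)) ≤ gaussianPDFReal 0 1 x := by
    intro x
    have h0 : (0:ℝ) ≤ gaussianPDFReal μ v x := (gaussianPDFReal_pos μ v x hv0).le
    have : ((gaussianPDFReal μ v x).toNNReal : ℝ) = gaussianPDFReal μ v x :=
      Real.coe_toNNReal _ h0
    rw [NNReal.smul_def, smul_eq_mul, this]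
    exact pointwise_bound μ σ hσ x
  calc ∫ x, (gaussianPDFReal μ v x).toNNReal • (|x - μ| * Real.exp ((1 - x ^ 2) / 2))
      ≤ ∫ x, gaussianPDFReal 0 1 x := by
        apply integral_mono_of_nonneg
        · filter_upwards with x
          have h0 : (0:ℝ) ≤ gaussianPDFReal μ v x := (gaussianPDFReal_pos μ v x hv0).le
          positivity
        · exact integrable_gaussianPDFReal 0 1
        · filter_upwards with x using hle x
    _ = 1 := integral_gaussianPDFReal_eq_one 0 one_ne_zero
end

section
/- Fix μ ∈ ℝ and σ > 0, and let M*(x) = (dN(μ,σ²)/dN(0,σ²+μ²))(x) be the likelihood ratio of N(μ,σ²) to N(0, σ²+μ²). Then for every σ₀ > 0, E_{X ~ N(0,σ₀²)}[M*(X)] ≤ 1, with equality when σ₀² = σ² + μ². Hence M* is an e-value for the composite null {N(0,σ₀²) : σ₀ > 0}. -/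
/-!
Completing the square, the expectation of the likelihood ratio under `N(0, v)` equals
`t * exp ((1 - t ^ 2) / 2)` with `t = (σ² + μ²) / √(μ² v + σ² (σ² + μ²))`. This is at most `1`
because `t² ≤ exp (t² - 1)`, and it equals `1` at `t = 1`, i.e. when `v = σ² + μ²`.
-/

open MeasureTheory ProbabilityTheory Real
open scoped NNReal

theorem integral_exp_quadratic {b : ℝ} (hb : b < 0) (c d : ℝ) :
    ∫ x : ℝ, exp (b * x ^ 2 + c * x + d) = √(π / -b) * exp (d - c ^ 2 / (4 * b)) := by
  have hcomplete (x : ℝ) : exp (b * x ^ 2 + c * x + d)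
      = exp (d - c ^ 2 / (4 * b)) * exp (- -b * (x + c / (2 * b)) ^ 2) := by
    have := hb.ne
    rw [← exp_add]; congr 1; field_simp; ring
  simp_rw [hcomplete]
  rw [integral_const_mul, integral_add_right_eq_self (fun x ↦ exp (- -b * x ^ 2)),
    integral_gaussian, mul_comm]

theorem integral_exp_quadratic_gaussianReal {v : ℝ≥0} (hv : v ≠ 0) {a : ℝ} (ha : 2 * a * v < 1)
    (c d : ℝ) :
    ∫ x, exp (a * x ^ 2 + c * x + d) ∂gaussianReal 0 v
      = exp (d + c ^ 2 * v / (2 * (1 - 2 * a * v))) / √(1 - 2 * a * v) := by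
  have hv₀ : (0 : ℝ) < v := by positivity
  have hw : 0 < 1 - 2 * a * v := by linarith
  have hpdf (x : ℝ) : gaussianPDFReal 0 v x • exp (a * x ^ 2 + c * x + d)
      = (√(2 * π * v))⁻¹ * exp (-((1 - 2 * a * v) / (2 * v)) * x ^ 2 + c * x + d) := by
    rw [gaussianPDFReal, smul_eq_mul, mul_assoc, ← exp_add]
    congr 2
    field_simp
    ring
  have hconst :
      (√(2 * π * v))⁻¹ * √(π / - -((1 - 2 * a * v) / (2 * v))) = 1 / √(1 - 2 * a * v) := by
    have : √(2 * π * v) ≠ 0 := by positivity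
    rw [neg_neg, div_div_eq_mul_div, sqrt_div' _ hw.le, show π * (2 * v) = 2 * π * v by ring]
    field_simp
  have hexp : d - c ^ 2 / (4 * -((1 - 2 * a * v) / (2 * v)))
      = d + c ^ 2 * v / (2 * (1 - 2 * a * v)) := by
    field_simp
    ring
  rw [integral_gaussianReal_eq_integral_smul hv]
  simp_rw [hpdf]
  rw [integral_const_mul, integral_exp_quadratic (neg_neg_of_pos (by positivity)), ← mul_assoc,
    hconst, hexp, one_div_mul_eq_div]

theorem integral_likelihoodRatio_gaussianReal (μ : ℝ) {σ : ℝ} (hσ : 0 < σ) {v : ℝ≥0}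
    (hv : v ≠ 0) :
    let t := (σ ^ 2 + μ ^ 2) / √(μ ^ 2 * v + σ ^ 2 * (σ ^ 2 + μ ^ 2))
    ∫ x, √(σ ^ 2 + μ ^ 2) / σ *
        exp (-(x - μ) ^ 2 / (2 * σ ^ 2) + x ^ 2 / (2 * (σ ^ 2 + μ ^ 2))) ∂gaussianReal 0 v
      = t * exp ((1 - t ^ 2) / 2) := by
  intro t
  set y := σ ^ 2 + μ ^ 2
  set Z := μ ^ 2 * v + σ ^ 2 * y
  have hy : 0 < y := by positivity
  have hZ : 0 < Z := by positivity
  have ha : 2 * -(μ ^ 2 / (2 * σ ^ 2 * y)) * v < 1 := by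
    have : 0 ≤ 2 * (μ ^ 2 / (2 * σ ^ 2 * y)) * v := by positivity
    linarith
  have hw : 1 - 2 * -(μ ^ 2 / (2 * σ ^ 2 * y)) * v = Z / (σ ^ 2 * y) := by
    field_simp
    ring
  have hexponent (x : ℝ) : -(x - μ) ^ 2 / (2 * σ ^ 2) + x ^ 2 / (2 * y)
      = -(μ ^ 2 / (2 * σ ^ 2 * y)) * x ^ 2 + μ / σ ^ 2 * x + -(μ ^ 2 / (2 * σ ^ 2)) := by
    field_simp
    ring
  have hconst : √y / σ / √(1 - 2 * -(μ ^ 2 / (2 * σ ^ 2 * y)) * v) = t := by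
    show _ = y / √Z
    rw [hw, sqrt_div' _ (by positivity), sqrt_mul' _ hy.le, sqrt_sq hσ.le]
    field_simp
    exact sq_sqrt hy.le
  have ht : t ^ 2 = y ^ 2 / Z := by rw [div_pow, sq_sqrt hZ.le]
  have hexp : -(μ ^ 2 / (2 * σ ^ 2))
      + (μ / σ ^ 2) ^ 2 * v / (2 * (1 - 2 * -(μ ^ 2 / (2 * σ ^ 2 * y)) * v)) = (1 - t ^ 2) / 2 := by
    rw [hw, ht]
    field_simp
    ring
  simp_rw [hexponent]
  rw [integral_const_mul, integral_exp_quadratic_gaussianReal hv ha, hexp, ← hconst]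
  ring

theorem mul_exp_half_one_sub_sq_le_one (t : ℝ) : t * exp ((1 - t ^ 2) / 2) ≤ 1 := by
  set E := exp ((t ^ 2 - 1) / 2)
  have hE : t ^ 2 ≤ E ^ 2 := by
    rw [sq E, ← exp_add, add_halves]
    linarith [add_one_le_exp (t ^ 2 - 1)]
  have ht : t ≤ E := by nlinarith [exp_pos ((t ^ 2 - 1) / 2)]
  calc t * exp ((1 - t ^ 2) / 2) ≤ E * exp ((1 - t ^ 2) / 2) := by gcongr
    _ = 1 := by rw [← exp_add]; ring_nf; exact exp_zero

/-- The likelihood ratio `M*(x) = dN(μ,σ²)/dN(0,σ²+μ²) (x)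
  = (√(σ²+μ²)/σ)·exp(−(x−μ)²/(2σ²) + x²/(2(σ²+μ²)))` satisfies
`E_{N(0,σ₀²)}[M*] ≤ 1` for every `σ₀ > 0`, with equality when `σ₀² = σ² + μ²`. -/
theorem stmt_3 (μ σ : ℝ) (hσ : 0 < σ) :
    ∀ σ₀ : ℝ, 0 < σ₀ →
      (∫ x, (Real.sqrt (σ ^ 2 + μ ^ 2) / σ) *
            Real.exp (-(x - μ) ^ 2 / (2 * σ ^ 2) + x ^ 2 / (2 * (σ ^ 2 + μ ^ 2)))
          ∂(gaussianReal 0 (Real.toNNReal (σ₀ ^ 2))) ≤ 1) ∧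
      (σ₀ ^ 2 = σ ^ 2 + μ ^ 2 →
        ∫ x, (Real.sqrt (σ ^ 2 + μ ^ 2) / σ) *
            Real.exp (-(x - μ) ^ 2 / (2 * σ ^ 2) + x ^ 2 / (2 * (σ ^ 2 + μ ^ 2)))
          ∂(gaussianReal 0 (Real.toNNReal (σ₀ ^ 2))) = 1) := by
  intro σ₀ hσ₀
  have hv : (σ₀ ^ 2).toNNReal ≠ 0 := (Real.toNNReal_pos.2 (by positivity)).ne'
  rw [integral_likelihoodRatio_gaussianReal μ hσ hv, Real.coe_toNNReal _ (sq_nonneg σ₀)]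
  refine ⟨mul_exp_half_one_sub_sq_le_one _, fun hσ₀_sq ↦ ?_⟩
  have hsq : μ ^ 2 * σ₀ ^ 2 + σ ^ 2 * (σ ^ 2 + μ ^ 2) = (σ ^ 2 + μ ^ 2) ^ 2 := by
    rw [hσ₀_sq]; ring
  have hy : 0 < σ ^ 2 + μ ^ 2 := by positivity
  simp only [hsq, sqrt_sq hy.le, div_self hy.ne']
  norm_num
end

section
/- Let n ≥ 2 and let S, V be reals with V > 0 and S² < nV (interpreted as S = ∑x_i, V = ∑x_i² for data not all proportional). Then ∫_ℝ [ (e^{−nθ²/2}/Γ(n/2)) ∫₀^∞ y^{n/2−1} exp(−y + θS√(2y/V)) dy ] dθ = √(2π/n) · (nV/(nV − S²))^{n/2}. -/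
open MeasureTheory Real Set

/-! Since the integrand is nonnegative, Fubini lets us integrate over `θ` first. Completing the
square, the Gaussian integral in `θ` equals `√(2π/n) · exp (S²y/(nV))`, which leaves the Gamma
integral `∫₀^∞ y^{n/2-1} e^{-(1 - S²/(nV)) y} dy = Γ(n/2) (nV/(nV - S²))^{n/2}`. -/

theorem exp_neg_mul_sq_add_mul_eq {a : ℝ} (ha : a ≠ 0) (b x : ℝ) :
    exp (-a * x ^ 2 + b * x) = exp (b ^ 2 / (4 * a)) * exp (-a * (x - b / (2 * a)) ^ 2) := by
  rw [← exp_add]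
  congr 1
  field_simp
  ring

theorem integrable_exp_neg_mul_sq_add_mul {a : ℝ} (ha : 0 < a) (b : ℝ) :
    Integrable fun x : ℝ ↦ exp (-a * x ^ 2 + b * x) := by
  simp_rw [exp_neg_mul_sq_add_mul_eq ha.ne']
  exact ((integrable_exp_neg_mul_sq ha).comp_sub_right _).const_mul _

theorem integral_exp_neg_mul_sq_add_mul {a : ℝ} (ha : 0 < a) (b : ℝ) :
    ∫ x : ℝ, exp (-a * x ^ 2 + b * x) = √(π / a) * exp (b ^ 2 / (4 * a)) := by
  simp_rw [exp_neg_mul_sq_add_mul_eq ha.ne', integral_const_mul,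
    integral_sub_right_eq_self (fun x ↦ exp (-a * x ^ 2)), integral_gaussian, mul_comm]

theorem exp_neg_mul_sq_div_two_mul_exp_eq {n : ℝ} (c b θ : ℝ) :
    exp (-n * θ ^ 2 / 2) * exp (c + θ * b) = exp c * exp (-(n / 2) * θ ^ 2 + b * θ) := by
  rw [← exp_add, ← exp_add]
  ring_nf

theorem integral_exp_neg_mul_sq_div_two_mul_exp {n : ℝ} (hn : 0 < n) (c b : ℝ) :
    ∫ θ : ℝ, exp (-n * θ ^ 2 / 2) * exp (c + θ * b) =
      √(2 * π / n) * exp (c + b ^ 2 / (2 * n)) := by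
  simp_rw [exp_neg_mul_sq_div_two_mul_exp_eq, integral_const_mul,
    integral_exp_neg_mul_sq_add_mul (half_pos hn), exp_add]
  field_simp
  ring_nf

noncomputable def tMixtureIntegrand (n S V θ y : ℝ) : ℝ :=
  exp (-n * θ ^ 2 / 2) * (y ^ (n / 2 - 1) * exp (-y + θ * S * √(2 * y / V)))

theorem tMixtureIntegrand_eq (n S V θ y : ℝ) :
    tMixtureIntegrand n S V θ y =
      y ^ (n / 2 - 1) * (exp (-n * θ ^ 2 / 2) * exp (-y + θ * (S * √(2 * y / V)))) := by
  rw [tMixtureIntegrand]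
  ring_nf

theorem integrable_tMixtureIntegrand_left {n : ℝ} (hn : 0 < n) (S V y : ℝ) :
    Integrable fun θ ↦ tMixtureIntegrand n S V θ y := by
  simp_rw [tMixtureIntegrand_eq, exp_neg_mul_sq_div_two_mul_exp_eq]
  exact ((integrable_exp_neg_mul_sq_add_mul (half_pos hn) _).const_mul _).const_mul _

theorem integral_tMixtureIntegrand_left {n V : ℝ} (hn : 0 < n) (hV : 0 ≤ V) (S : ℝ) {y : ℝ}
    (hy : 0 ≤ y) :
    ∫ θ, tMixtureIntegrand n S V θ y =
      √(2 * π / n) * (y ^ (n / 2 - 1) * exp (-((1 - S ^ 2 / (n * V)) * y))) := by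
  have hsq : (S * √(2 * y / V)) ^ 2 / (2 * n) = S ^ 2 / (n * V) * y := by
    rw [mul_pow, sq_sqrt (by positivity)]
    field_simp
  simp_rw [tMixtureIntegrand_eq, integral_const_mul, integral_exp_neg_mul_sq_div_two_mul_exp hn,
    hsq]
  ring_nf

theorem integrable_tMixtureIntegrand {n S V : ℝ} (hn : 0 < n) (hV : 0 ≤ V)
    (hSV : S ^ 2 < n * V) :
    Integrable (Function.uncurry (tMixtureIntegrand n S V))
      (volume.prod (volume.restrict (Ioi 0))) := by
  have hnV : 0 < n * V := (sq_nonneg S).trans_lt hSV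
  have hr : 0 < 1 - S ^ 2 / (n * V) := by rwa [sub_pos, div_lt_one hnV]
  have hmeas : AEStronglyMeasurable (Function.uncurry (tMixtureIntegrand n S V))
      (volume.prod (volume.restrict (Ioi 0))) := by
    unfold Function.uncurry tMixtureIntegrand
    fun_prop
  refine (integrable_prod_iff' hmeas).2
    ⟨.of_forall fun y ↦ integrable_tMixtureIntegrand_left hn S V y, ?_⟩
  have hnonneg : ∀ y ∈ Ioi (0 : ℝ), ∀ θ, 0 ≤ tMixtureIntegrand n S V θ y := fun y hy θ ↦ by
    have := rpow_nonneg hy.out.le (n / 2 - 1)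
    unfold tMixtureIntegrand
    positivity
  have hgamma := (integrableOn_rpow_mul_exp_neg_mul_rpow (s := n / 2 - 1) (p := 1)
    (by linarith) one_pos hr).const_mul √(2 * π / n)
  refine IntegrableOn.congr_fun hgamma (fun y hy ↦ ?_) measurableSet_Ioi
  simp only [Function.uncurry_apply_pair, norm_of_nonneg (hnonneg y hy _),
    integral_tMixtureIntegrand_left hn hV S hy.out.le, rpow_one, neg_mul]

theorem integral_integral_tMixtureIntegrand {n S V : ℝ} (hn : 0 < n) (hV : 0 ≤ V)
    (hSV : S ^ 2 < n * V) :
    ∫ θ, ∫ y in Ioi 0, tMixtureIntegrand n S V θ y =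
      √(2 * π / n) * ((n * V) / (n * V - S ^ 2)) ^ (n / 2) * Gamma (n / 2) := by
  have hnV : 0 < n * V := (sq_nonneg S).trans_lt hSV
  have hr : 0 < 1 - S ^ 2 / (n * V) := by rwa [sub_pos, div_lt_one hnV]
  rw [integral_integral_swap (integrable_tMixtureIntegrand hn hV hSV),
    setIntegral_congr_fun measurableSet_Ioi
      fun y hy ↦ integral_tMixtureIntegrand_left hn hV S (le_of_lt hy),
    integral_const_mul, integral_rpow_mul_exp_neg_mul_Ioi (half_pos hn) hr,
    one_sub_div hnV.ne', one_div_div, mul_assoc]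

theorem stmt_11_general (n : ℕ) (S V : ℝ) (hV : 0 < V) (hSV : S ^ 2 < n * V) :
    (∫ θ : ℝ, (Real.exp (-(n : ℝ) * θ ^ 2 / 2) / Real.Gamma ((n : ℝ) / 2)) *
        ∫ y in Set.Ioi (0 : ℝ),
          y ^ ((n : ℝ) / 2 - 1) * Real.exp (-y + θ * S * Real.sqrt (2 * y / V)))
      = Real.sqrt (2 * Real.pi / n) *
          ((n * V) / (n * V - S ^ 2)) ^ ((n : ℝ) / 2) := by
  have hn : (0 : ℝ) < n := pos_of_mul_pos_left ((sq_nonneg S).trans_lt hSV) hV.le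
  have hΓ : Gamma (n / 2) ≠ 0 := (Gamma_pos_of_pos (half_pos hn)).ne'
  simp_rw [div_mul_eq_mul_div, integral_div, ← integral_const_mul]
  have hmix := integral_integral_tMixtureIntegrand hn hV.le hSV
  unfold tMixtureIntegrand at hmix
  rw [hmix, mul_div_cancel_right₀ _ hΓ]

/-- Flat mixture of scale-invariant t-likelihood ratios: for `n ≥ 2`, `V > 0`, `S² < nV`,
`∫_ℝ (e^{−nθ²/2}/Γ(n/2)) ∫₀^∞ y^{n/2−1} e^{−y+θS√(2y/V)} dy dθ
  = √(2π/n) (nV/(nV−S²))^{n/2}`. -/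
theorem stmt_11 (n : ℕ) (hn : 2 ≤ n) (S V : ℝ) (hV : 0 < V) (hSV : S ^ 2 < n * V) :
    (∫ θ : ℝ, (Real.exp (-(n : ℝ) * θ ^ 2 / 2) / Real.Gamma ((n : ℝ) / 2)) *
        ∫ y in Set.Ioi (0 : ℝ),
          y ^ ((n : ℝ) / 2 - 1) * Real.exp (-y + θ * S * Real.sqrt (2 * y / V)))
      = Real.sqrt (2 * Real.pi / n) *
          ((n * V) / (n * V - S ^ 2)) ^ ((n : ℝ) / 2) :=
  stmt_11_general n S V hV hSV
end

section
/- Let n ≥ 1, c > 0, and let S, V be reals with V > 0 and S² ≤ nV. Then ∫_ℝ [ (e^{−nθ²/2}/Γ(n/2)) ∫₀^∞ y^{n/2−1} exp(−y + θS√(2y/V)) dy ] · (c/√(2π))·e^{−c²θ²/2} dθ = √(c²/(n+c²)) · (1 − S²/((n+c²)V))^{−n/2}. -/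
open MeasureTheory

lemma gauss_int {b : ℝ} (hb : 0 < b) (a : ℝ) :
    Integrable (fun θ : ℝ => Real.exp (-(b * θ ^ 2) / 2 + a * θ)) ∧
    ∫ θ : ℝ, Real.exp (-(b * θ ^ 2) / 2 + a * θ)
      = Real.sqrt (2 * Real.pi / b) * Real.exp (a ^ 2 / (2 * b)) := by
  have hb2 : 0 < b / 2 := by linarith
  have h1 : (fun θ : ℝ => Real.exp (-(b * θ ^ 2) / 2 + a * θ))
      = fun θ => Real.exp (a ^ 2 / (2 * b)) * Real.exp (-(b / 2) * (θ - a / b) ^ 2) := by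
    funext θ
    rw [← Real.exp_add]
    congr 1
    field_simp
    ring
  constructor
  · rw [h1]
    exact ((integrable_exp_neg_mul_sq hb2).comp_sub_right (a / b)).const_mul _
  · rw [h1, integral_const_mul,
      integral_sub_right_eq_self (fun θ : ℝ => Real.exp (-(b / 2) * θ ^ 2)) (a / b),
      integral_gaussian]
    rw [mul_comm]
    congr 2
    rw [div_div_eq_mul_div]
    ring

lemma gamma_integrable {s r : ℝ} (hs : 0 < s) (hr : 0 < r) :
    IntegrableOn (fun y : ℝ => y ^ (s - 1) * Real.exp (-(r * y))) (Set.Ioi 0) := by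
  have h2 : IntegrableOn
      (fun y : ℝ => Real.exp (-(r * y)) * (r * y) ^ (s - 1)) (Set.Ioi 0) := by
    have := (integrableOn_Ioi_comp_mul_left_iff
      (fun x : ℝ => Real.exp (-x) * x ^ (s - 1)) 0 hr).mpr
    simpa using this (by simpa using Real.GammaIntegral_convergent hs)
  have h3 := h2.const_mul ((r : ℝ) ^ (s - 1))⁻¹
  refine h3.congr ((ae_restrict_iff' measurableSet_Ioi).mpr (Filter.Eventually.of_forall
    fun y hy => ?_))
  have hy' : (0:ℝ) < y := hy
  simp only
  rw [Real.mul_rpow hr.le hy'.le]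
  field_simp [(Real.rpow_pos_of_pos hr (s-1)).ne']


/-- Gaussian mixture (prior `θ ~ N(0, c⁻²)`) of scale-invariant t-likelihood ratios:
for `n ≥ 1`, `c > 0`, `V > 0`, `S² ≤ nV`,
`∫_ℝ (e^{−nθ²/2}/Γ(n/2)) [∫₀^∞ y^{n/2−1} e^{−y+θS√(2y/V)} dy] (c/√(2π)) e^{−c²θ²/2} dθ
  = √(c²/(n+c²)) (1 − S²/((n+c²)V))^{−n/2}`. -/
theorem stmt_12 (n : ℕ) (hn : 1 ≤ n) (c : ℝ) (hc : 0 < c) (S V : ℝ) (hV : 0 < V)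
    (hSV : S ^ 2 ≤ n * V) :
    (∫ θ : ℝ, ((Real.exp (-(n : ℝ) * θ ^ 2 / 2) / Real.Gamma ((n : ℝ) / 2)) *
        ∫ y in Set.Ioi (0 : ℝ),
          y ^ ((n : ℝ) / 2 - 1) * Real.exp (-y + θ * S * Real.sqrt (2 * y / V))) *
        ((c / Real.sqrt (2 * Real.pi)) * Real.exp (-c ^ 2 * θ ^ 2 / 2)))
      = Real.sqrt (c ^ 2 / (n + c ^ 2)) *
          (1 - S ^ 2 / ((n + c ^ 2) * V)) ^ (-(n : ℝ) / 2) := by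
  have hn1 : (1:ℝ) ≤ (n:ℝ) := by exact_mod_cast hn
  have hb : (0:ℝ) < (n:ℝ) + c ^ 2 := by positivity
  have hs : (0:ℝ) < (n:ℝ) / 2 := by linarith
  have hΓ : 0 < Real.Gamma ((n:ℝ) / 2) := Real.Gamma_pos_of_pos hs
  have h2π : (0:ℝ) < Real.sqrt (2 * Real.pi) := Real.sqrt_pos.mpr (by positivity)
  have hrpos : 0 < 1 - S ^ 2 / (((n:ℝ) + c ^ 2) * V) := by
    have h1 : S ^ 2 < ((n:ℝ) + c ^ 2) * V := by nlinarith [mul_pos (pow_pos hc 2) hV]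
    have h2 := (div_lt_one (by positivity : (0:ℝ) < ((n:ℝ) + c ^ 2) * V)).mpr h1
    linarith
  set f : ℝ → ℝ → ℝ := fun θ y => y ^ ((n:ℝ) / 2 - 1) * Real.exp (-y) *
      Real.exp (-(((n:ℝ) + c ^ 2) * θ ^ 2) / 2 + (S * Real.sqrt (2 * y / V)) * θ) with hf
  -- value of the θ-integral
  have hθint : ∀ y : ℝ, 0 < y → (∫ θ : ℝ, f θ y)
      = Real.sqrt (2 * Real.pi / ((n:ℝ) + c ^ 2)) *
        (y ^ ((n:ℝ) / 2 - 1) *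
          Real.exp (-((1 - S ^ 2 / (((n:ℝ) + c ^ 2) * V)) * y))) := by
    intro y hy
    simp only [hf]
    rw [integral_const_mul, (gauss_int hb (S * Real.sqrt (2 * y / V))).2]
    have hsq : (S * Real.sqrt (2 * y / V)) ^ 2 = S ^ 2 * (2 * y / V) := by
      rw [mul_pow, Real.sq_sqrt (by positivity)]
    rw [hsq]
    have hE : Real.exp (-y) * Real.exp (S ^ 2 * (2 * y / V) / (2 * ((n:ℝ) + c ^ 2)))
        = Real.exp (-((1 - S ^ 2 / (((n:ℝ) + c ^ 2) * V)) * y)) := by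
      rw [← Real.exp_add]; congr 1; field_simp; ring
    linear_combination
      (y ^ ((n:ℝ) / 2 - 1) * Real.sqrt (2 * Real.pi / ((n:ℝ) + c ^ 2))) * hE
  -- measurability
  have hmeas : AEStronglyMeasurable (Function.uncurry f)
      ((volume : Measure ℝ).prod (volume.restrict (Set.Ioi 0))) := by
    apply Measurable.aestronglyMeasurable
    simp only [hf, Function.uncurry]
    fun_prop
  -- integrability on the product
  have hint_prod : Integrable (Function.uncurry f)
      ((volume : Measure ℝ).prod (volume.restrict (Set.Ioi 0))) := by
    rw [integrable_prod_iff' hmeas]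
    constructor
    · refine Filter.Eventually.of_forall fun y => ?_
      have := ((gauss_int hb (S * Real.sqrt (2 * y / V))).1).const_mul
        (y ^ ((n:ℝ) / 2 - 1) * Real.exp (-y))
      simpa [hf, Function.uncurry, mul_assoc] using this
    · have hg := (gamma_integrable hs hrpos).const_mul
        (Real.sqrt (2 * Real.pi / ((n:ℝ) + c ^ 2)))
      refine hg.congr ((ae_restrict_iff' measurableSet_Ioi).mpr
        (Filter.Eventually.of_forall fun y hy => ?_))
      have hy' : (0:ℝ) < y := hy
      have hpos : ∀ θ, 0 ≤ f θ y := fun θ => by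
        simp only [hf]; positivity
      have hnorm : (fun θ => ‖Function.uncurry f (θ, y)‖) = fun θ => f θ y :=
        funext fun θ => by
          simp only [Function.uncurry]
          rw [Real.norm_eq_abs, abs_of_nonneg (hpos θ)]
      simp only
      rw [hnorm, hθint y hy']
  -- pointwise rewrite of the outer integrand
  have hC : ∀ θ : ℝ, ((Real.exp (-(n : ℝ) * θ ^ 2 / 2) / Real.Gamma ((n : ℝ) / 2)) *
        ∫ y in Set.Ioi (0 : ℝ),
          y ^ ((n : ℝ) / 2 - 1) * Real.exp (-y + θ * S * Real.sqrt (2 * y / V))) *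
        ((c / Real.sqrt (2 * Real.pi)) * Real.exp (-c ^ 2 * θ ^ 2 / 2))
      = (c / (Real.sqrt (2 * Real.pi) * Real.Gamma ((n:ℝ) / 2))) *
        ∫ y in Set.Ioi (0:ℝ), f θ y := by
    intro θ
    have hins : (∫ y in Set.Ioi (0:ℝ), f θ y)
        = (Real.exp (-(n:ℝ) * θ ^ 2 / 2) * Real.exp (-c ^ 2 * θ ^ 2 / 2)) *
          ∫ y in Set.Ioi (0:ℝ),
            y ^ ((n : ℝ) / 2 - 1) * Real.exp (-y + θ * S * Real.sqrt (2 * y / V)) := by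
      rw [← integral_const_mul]
      refine integral_congr_ae (Filter.Eventually.of_forall fun y => ?_)
      simp only [hf]
      have hE : Real.exp (-y) *
          Real.exp (-(((n:ℝ) + c ^ 2) * θ ^ 2) / 2 + S * Real.sqrt (2 * y / V) * θ)
          = Real.exp (-(n:ℝ) * θ ^ 2 / 2) * Real.exp (-c ^ 2 * θ ^ 2 / 2) *
            Real.exp (-y + θ * S * Real.sqrt (2 * y / V)) := by
        rw [← Real.exp_add, ← Real.exp_add, ← Real.exp_add]; congr 1; ring
      linear_combination (y ^ ((n:ℝ) / 2 - 1)) * hE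
    rw [hins]
    field_simp
  calc (∫ θ : ℝ, ((Real.exp (-(n : ℝ) * θ ^ 2 / 2) / Real.Gamma ((n : ℝ) / 2)) *
        ∫ y in Set.Ioi (0 : ℝ),
          y ^ ((n : ℝ) / 2 - 1) * Real.exp (-y + θ * S * Real.sqrt (2 * y / V))) *
        ((c / Real.sqrt (2 * Real.pi)) * Real.exp (-c ^ 2 * θ ^ 2 / 2)))
      = ∫ θ : ℝ, (c / (Real.sqrt (2 * Real.pi) * Real.Gamma ((n:ℝ) / 2))) *
          ∫ y in Set.Ioi (0:ℝ), f θ y :=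
        integral_congr_ae (Filter.Eventually.of_forall hC)
    _ = (c / (Real.sqrt (2 * Real.pi) * Real.Gamma ((n:ℝ) / 2))) *
          ∫ θ : ℝ, ∫ y in Set.Ioi (0:ℝ), f θ y := integral_const_mul _ _
    _ = (c / (Real.sqrt (2 * Real.pi) * Real.Gamma ((n:ℝ) / 2))) *
          ∫ y in Set.Ioi (0:ℝ), ∫ θ : ℝ, f θ y := by
        rw [integral_integral_swap hint_prod]
    _ = (c / (Real.sqrt (2 * Real.pi) * Real.Gamma ((n:ℝ) / 2))) *
          ∫ y in Set.Ioi (0:ℝ), Real.sqrt (2 * Real.pi / ((n:ℝ) + c ^ 2)) *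
            (y ^ ((n:ℝ) / 2 - 1) *
              Real.exp (-((1 - S ^ 2 / (((n:ℝ) + c ^ 2) * V)) * y))) := by
        congr 1
        exact setIntegral_congr_fun measurableSet_Ioi fun y hy => hθint y hy
    _ = (c / (Real.sqrt (2 * Real.pi) * Real.Gamma ((n:ℝ) / 2))) *
          (Real.sqrt (2 * Real.pi / ((n:ℝ) + c ^ 2)) *
            ((1 / (1 - S ^ 2 / (((n:ℝ) + c ^ 2) * V))) ^ ((n:ℝ) / 2) *
              Real.Gamma ((n:ℝ) / 2))) := by
        rw [integral_const_mul, Real.integral_rpow_mul_exp_neg_mul_Ioi hs hrpos]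
    _ = Real.sqrt (c ^ 2 / (n + c ^ 2)) *
          (1 - S ^ 2 / ((n + c ^ 2) * V)) ^ (-(n : ℝ) / 2) := by
        have h1 : Real.sqrt (2 * Real.pi / ((n:ℝ) + c ^ 2))
            = Real.sqrt (2 * Real.pi) / Real.sqrt ((n:ℝ) + c ^ 2) :=
          Real.sqrt_div (by positivity) _
        have h2 : Real.sqrt (c ^ 2 / ((n:ℝ) + c ^ 2)) = c / Real.sqrt ((n:ℝ) + c ^ 2) := by
          rw [Real.sqrt_div (sq_nonneg c), Real.sqrt_sq hc.le]
        have h3 : (1 - S ^ 2 / (((n:ℝ) + c ^ 2) * V)) ^ (-(n:ℝ) / 2)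
            = ((1 - S ^ 2 / (((n:ℝ) + c ^ 2) * V)) ^ ((n:ℝ) / 2))⁻¹ := by
          rw [neg_div, Real.rpow_neg hrpos.le]
        have h4 : (1 / (1 - S ^ 2 / (((n:ℝ) + c ^ 2) * V))) ^ ((n:ℝ) / 2)
            = ((1 - S ^ 2 / (((n:ℝ) + c ^ 2) * V)) ^ ((n:ℝ) / 2))⁻¹ := by
          rw [one_div, Real.inv_rpow hrpos.le]
        rw [h1, h2, h3, h4]
        have hbs : 0 < Real.sqrt ((n:ℝ) + c ^ 2) := Real.sqrt_pos.mpr hb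
        have hrp : 0 < (1 - S ^ 2 / (((n:ℝ) + c ^ 2) * V)) ^ ((n:ℝ) / 2) :=
          Real.rpow_pos_of_pos hrpos _
        field_simp
end

section
/- Let n ≥ 1, c > 0, α ∈ (0,1), and suppose ((α²c²/(n+c²))^{1/n}·(n+c²) − c²) > 0. For data x₁,…,x_n with sample mean x̄ and V = ∑x_i², and any μ₀ ∈ ℝ, the inequality √(c²/(n+c²)) · (1 − (S − nμ₀)²/((n+c²)(V − 2Sμ₀ + nμ₀²)))^{−n/2} ≤ 1/α (with S = ∑x_i) is equivalent to (μ₀ − x̄)² ≤ [(n+c²)(1 − (α²c²/(n+c²))^{1/n}) / ((α²c²/(n+c²))^{1/n}(n+c²) − c²)] · (V/n − x̄²). -/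
/-!
Both sides are rewritten in the sample variance `w = V/n - x̄²` and `y = (μ₀ - x̄)²`.
Squaring and taking `n`-th roots turns the threshold crossing into `β ≤ 1 - n y / ((n+c²)(w+y))`
with `β = (α²c²/(n+c²))^{1/n}`, because `V - 2Sμ₀ + nμ₀² = n (w + y)` and `S - nμ₀ = -n (μ₀ - x̄)`.
Clearing denominators, this is linear in `y`, with coefficient `β(n+c²) - c²`.
-/

open Real

lemma sqrt_mul_rpow_neg_half_le_one_div_iff {a r α p : ℝ} (ha : 0 ≤ a) (hr : 0 < r)
    (hα : 0 < α) (hp : 0 < p) :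
    √a * r ^ (-p / 2) ≤ 1 / α ↔ (α ^ 2 * a) ^ (1 / p) ≤ r := by
  have hsq : (r ^ (p / 2)) ^ 2 = r ^ p := by
    rw [← rpow_natCast, ← rpow_mul hr.le]
    norm_num
  have hsqrt : √a * α = √(α ^ 2 * a) := by
    rw [sqrt_mul (sq_nonneg α), sqrt_sq hα.le, mul_comm]
  rw [neg_div, rpow_neg hr.le, ← div_eq_mul_inv, div_le_div_iff₀ (rpow_pos_of_pos hr _) hα,
    one_mul, hsqrt, sqrt_le_left (rpow_nonneg hr.le _), hsq, one_div,
    rpow_inv_le_iff_of_pos (by positivity) hr.le hp]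

lemma sum_sq_sub_eq_mul_variance_add {n : ℝ} (hn : n ≠ 0) (S V μ₀ : ℝ) :
    V - 2 * S * μ₀ + n * μ₀ ^ 2 = n * ((V / n - (S / n) ^ 2) + (μ₀ - S / n) ^ 2) := by
  field_simp
  ring

lemma sq_sub_div_sum_sq_sub_eq {n : ℝ} (hn : n ≠ 0) (S V μ₀ N : ℝ) :
    (S - n * μ₀) ^ 2 / (N * (V - 2 * S * μ₀ + n * μ₀ ^ 2))
      = n * (μ₀ - S / n) ^ 2 / (N * ((V / n - (S / n) ^ 2) + (μ₀ - S / n) ^ 2)) := by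
  rw [sum_sq_sub_eq_mul_variance_add hn, mul_left_comm N n, ← mul_div_mul_left _ _ hn]
  field_simp
  ring

lemma le_one_sub_div_iff_le_mul {n c β y w : ℝ} (hn : 0 < n) (hwy : 0 < w + y)
    (hd : 0 < β * (n + c ^ 2) - c ^ 2) :
    β ≤ 1 - n * y / ((n + c ^ 2) * (w + y))
      ↔ y ≤ (n + c ^ 2) * (1 - β) / (β * (n + c ^ 2) - c ^ 2) * w := by
  rw [le_sub_comm, div_le_iff₀ (by positivity), div_mul_eq_mul_div, le_div_iff₀ hd]
  constructor <;> intro h <;> linarith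

theorem stmt_15_general (n : ℕ) (hn : 1 ≤ n) (c : ℝ) (α : ℝ) (hα : α ∈ Set.Ioo (0:ℝ) 1)
    (hden : 0 < (α ^ 2 * c ^ 2 / (n + c ^ 2)) ^ ((1 : ℝ) / n) * (n + c ^ 2) - c ^ 2)
    (S V μ₀ : ℝ)
    (hq : 0 < V - 2 * S * μ₀ + n * μ₀ ^ 2)
    (hlt : (S - n * μ₀) ^ 2 < (n + c ^ 2) * (V - 2 * S * μ₀ + n * μ₀ ^ 2)) :
    (Real.sqrt (c ^ 2 / (n + c ^ 2)) *
        (1 - (S - n * μ₀) ^ 2 / ((n + c ^ 2) * (V - 2 * S * μ₀ + n * μ₀ ^ 2)))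
          ^ (-(n : ℝ) / 2) ≤ 1 / α)
    ↔ (μ₀ - S / n) ^ 2
        ≤ ((n + c ^ 2) * (1 - (α ^ 2 * c ^ 2 / (n + c ^ 2)) ^ ((1 : ℝ) / n)) /
            ((α ^ 2 * c ^ 2 / (n + c ^ 2)) ^ ((1 : ℝ) / n) * (n + c ^ 2) - c ^ 2)) *
          (V / n - (S / n) ^ 2) := by
  have hn0 : (0 : ℝ) < n := Nat.cast_pos.mpr hn
  have hr : 0 < 1 - (S - n * μ₀) ^ 2 / ((n + c ^ 2) * (V - 2 * S * μ₀ + n * μ₀ ^ 2)) :=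
    sub_pos.mpr ((div_lt_one (by positivity)).mpr hlt)
  have hwy : 0 < (V / n - (S / n) ^ 2) + (μ₀ - S / n) ^ 2 := by
    rw [sum_sq_sub_eq_mul_variance_add hn0.ne'] at hq
    exact pos_of_mul_pos_right hq hn0.le
  rw [sqrt_mul_rpow_neg_half_le_one_div_iff (by positivity) hr hα.1 hn0, ← mul_div_assoc,
    sq_sub_div_sum_sq_sub_eq hn0.ne']
  exact le_one_sub_div_iff_le_mul hn0 hwy hden

/-- The level-`1/α` threshold crossing of the Gaussian-mixture scale-invariant t-test
martingale (with data shifted by `μ₀`) is equivalent to the explicit confidence interval: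
`√(c²/(n+c²)) (1 − (S−nμ₀)²/((n+c²)(V−2Sμ₀+nμ₀²)))^{−n/2} ≤ 1/α` iff
`(μ₀ − x̄)² ≤ [(n+c²)(1 − (α²c²/(n+c²))^{1/n}) / ((α²c²/(n+c²))^{1/n}(n+c²) − c²)] (V/n − x̄²)`
where `x̄ = S/n`. -/
theorem stmt_15 (n : ℕ) (hn : 1 ≤ n) (c : ℝ) (hc : 0 < c) (α : ℝ) (hα : α ∈ Set.Ioo (0:ℝ) 1)
    (hden : 0 < (α ^ 2 * c ^ 2 / (n + c ^ 2)) ^ ((1 : ℝ) / n) * (n + c ^ 2) - c ^ 2)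
    (S V μ₀ : ℝ)
    (hq : 0 < V - 2 * S * μ₀ + n * μ₀ ^ 2)
    (hlt : (S - n * μ₀) ^ 2 < (n + c ^ 2) * (V - 2 * S * μ₀ + n * μ₀ ^ 2)) :
    (Real.sqrt (c ^ 2 / (n + c ^ 2)) *
        (1 - (S - n * μ₀) ^ 2 / ((n + c ^ 2) * (V - 2 * S * μ₀ + n * μ₀ ^ 2)))
          ^ (-(n : ℝ) / 2) ≤ 1 / α)
    ↔ (μ₀ - S / n) ^ 2
        ≤ ((n + c ^ 2) * (1 - (α ^ 2 * c ^ 2 / (n + c ^ 2)) ^ ((1 : ℝ) / n)) /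
            ((α ^ 2 * c ^ 2 / (n + c ^ 2)) ^ ((1 : ℝ) / n) * (n + c ^ 2) - c ^ 2)) *
          (V / n - (S / n) ^ 2) :=
  stmt_15_general n hn c α hα hden S V μ₀ hq hlt
end

section
/- Let X₁, X₂, … be i.i.d. with distribution P having mean μ ∈ ℝ and variance σ² > 0. Let S_n = ∑_{i=1}^n X_i, V_n = ∑_{i=1}^n X_i², and for fixed c > 0 define G_n^{(c)} = √(c²/(n+c²))·((n+c²)V_n/((n+c²)V_n − S_n²))^{n/2}. Then (log G_n^{(c)})/n → (1/2)·log(1 + μ²/σ²) almost surely as n → ∞. -/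
/-!
By the strong law of large numbers applied to `x` and `x²`, almost surely `S_n/n → μ` and
`V_n/n → σ² + μ²`. Dividing numerator and denominator by `n²`, the ratio inside the power tends
to `(σ² + μ²)/σ² = 1 + μ²/σ²`, so `(n/2) log` of it, divided by `n`, tends to half its log,
while the prefactor only contributes `log (c²/(n + c²)) / (2n) → 0`.
-/

open MeasureTheory ProbabilityTheory Filter Finset Topology

theorem integral_sq_eq_add_sq_of_integral_sub_sq {P : Measure ℝ} [IsProbabilityMeasure P]
    {μ σ : ℝ} (hL2 : Integrable (fun x => x ^ 2) P)
    (hmean : ∫ x, x ∂P = μ) (hvar : ∫ x, (x - μ) ^ 2 ∂P = σ ^ 2) :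
    ∫ x, x ^ 2 ∂P = σ ^ 2 + μ ^ 2 := by
  have hid : MemLp id 2 P := (memLp_two_iff_integrable_sq aestronglyMeasurable_id).2 hL2
  have h := variance_eq_sub hid
  rw [variance_eq_integral aemeasurable_id] at h
  simp only [id, Pi.pow_apply] at h
  rw [hmean, hvar] at h
  linarith

theorem strong_law_ae_comp {Ω : Type*} {mΩ : MeasurableSpace Ω} {Pr : Measure Ω}
    {P : Measure ℝ} {X : ℕ → Ω → ℝ} (hXm : ∀ i, Measurable (X i)) (hiid : iIndepFun X Pr)
    (hlaw : ∀ i, Pr.map (X i) = P) {f : ℝ → ℝ} (hfm : Measurable f) (hf : Integrable f P) :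
    ∀ᵐ ω ∂Pr, Tendsto (fun n : ℕ => (∑ i ∈ range n, f (X i ω)) / n) atTop
      (𝓝 (∫ x, f x ∂P)) := by
  have hint : Integrable (f ∘ X 0) Pr := by
    rw [← hlaw 0] at hf
    exact hf.comp_measurable (hXm 0)
  have hmean : Pr[f ∘ X 0] = ∫ x, f x ∂P := by
    rw [← hlaw 0, integral_map (hXm 0).aemeasurable hfm.aestronglyMeasurable]
    rfl
  rw [← hmean]
  exact strong_law_ae_real (fun i => f ∘ X i) hint
    (fun i j hij => (hiid.indepFun hij).comp hfm hfm)
    (fun i => ⟨(hfm.comp (hXm i)).aemeasurable, (hfm.comp (hXm 0)).aemeasurable, by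
      rw [← Measure.map_map hfm (hXm i), ← Measure.map_map hfm (hXm 0), hlaw, hlaw]⟩)

theorem tendsto_log_mul_rpow_div_atTop {s R : ℕ → ℝ} {L : ℝ} (hs : ∀ n, s n ≠ 0)
    (hslog : Tendsto (fun n : ℕ => Real.log (s n) / n) atTop (𝓝 0))
    (hR : Tendsto R atTop (𝓝 L)) (hL : 0 < L) :
    Tendsto (fun n : ℕ => Real.log (s n * R n ^ ((n : ℝ) / 2)) / n) atTop
      (𝓝 (1 / 2 * Real.log L)) := by
  have hlim := hslog.add ((hR.log hL.ne').const_mul (1 / 2))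
  rw [zero_add] at hlim
  refine hlim.congr' ?_
  filter_upwards [hR.eventually (eventually_gt_nhds hL), eventually_ne_atTop 0] with n hRn hn
  have hn' : (n : ℝ) ≠ 0 := Nat.cast_ne_zero.2 hn
  rw [Real.log_mul (hs n) (Real.rpow_pos_of_pos hRn _).ne', Real.log_rpow hRn]
  field_simp

theorem tendsto_log_sqrt_div_add_div_atTop {c : ℝ} (hc : c ≠ 0) :
    Tendsto (fun n : ℕ => Real.log (Real.sqrt (c ^ 2 / (n + c ^ 2))) / n) atTop (𝓝 0) := by
  have hlog : Tendsto (fun n : ℕ => Real.log (n + c ^ 2) / n) atTop (𝓝 0) := by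
    have h := (Real.tendsto_pow_log_div_mul_add_atTop 1 (-(c ^ 2)) 1 one_ne_zero).comp
      (tendsto_atTop_add_const_right atTop (c ^ 2) tendsto_natCast_atTop_atTop)
    simpa [Function.comp_def] using h
  have hlim := ((tendsto_const_nhds (x := Real.log (c ^ 2))).div_atTop
    tendsto_natCast_atTop_atTop |>.sub hlog).div_const 2
  rw [sub_zero, zero_div] at hlim
  refine hlim.congr fun n => ?_
  have hpos : (0 : ℝ) < n + c ^ 2 := by positivity
  rw [Real.log_sqrt (by positivity), Real.log_div (by positivity) hpos.ne']
  ring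

theorem tendsto_mul_div_mul_sub_sq {S V : ℕ → ℝ} {μ m : ℝ} (a : ℝ)
    (hS : Tendsto (fun n : ℕ => S n / n) atTop (𝓝 μ))
    (hV : Tendsto (fun n : ℕ => V n / n) atTop (𝓝 m)) (hm : μ ^ 2 < m) :
    Tendsto (fun n : ℕ => (n + a) * V n / ((n + a) * V n - S n ^ 2)) atTop
      (𝓝 (m / (m - μ ^ 2))) := by
  have hq : Tendsto (fun n : ℕ => (n + a) / n) atTop (𝓝 1) := by
    have h := (tendsto_const_nhds (x := a)).div_atTop tendsto_natCast_atTop_atTop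
    rw [← add_zero 1]
    refine (tendsto_const_nhds.add h).congr' ?_
    filter_upwards [eventually_ne_atTop 0] with n hn
    field_simp
  have hA := hq.mul hV
  rw [one_mul] at hA
  have hlim := hA.div (hA.sub (hS.pow 2)) (sub_pos.2 hm).ne'
  refine hlim.congr' ?_
  filter_upwards [eventually_ne_atTop 0] with n hn
  have hn' : (n : ℝ) ≠ 0 := Nat.cast_ne_zero.2 hn
  have hsq : ((n : ℝ) ^ 2) ≠ 0 := pow_ne_zero 2 hn'
  rw [Pi.div_apply, ← div_div_div_cancel_right₀ hsq ((n + a) * V n)]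
  congr 1 <;> field_simp

theorem stmt_18_general {Ω : Type*} {mΩ : MeasurableSpace Ω} (Pr : Measure Ω)
    (P : Measure ℝ) [IsProbabilityMeasure P]
    (X : ℕ → Ω → ℝ) (hXm : ∀ i, Measurable (X i))
    (hiid : iIndepFun X Pr)
    (hlaw : ∀ i, Pr.map (X i) = P)
    (μ σ : ℝ) (hσ : 0 < σ)
    (hL2 : Integrable (fun x => x ^ 2) P)
    (hmean : ∫ x, x ∂P = μ) (hvar : ∫ x, (x - μ) ^ 2 ∂P = σ ^ 2)
    (c : ℝ) (hc : 0 < c) :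
    ∀ᵐ ω ∂Pr, Filter.Tendsto (fun n : ℕ =>
        Real.log (Real.sqrt (c ^ 2 / (n + c ^ 2)) *
          (((n + c ^ 2) * ∑ i ∈ Finset.range n, (X i ω) ^ 2) /
            ((n + c ^ 2) * (∑ i ∈ Finset.range n, (X i ω) ^ 2) -
              (∑ i ∈ Finset.range n, X i ω) ^ 2)) ^ ((n : ℝ) / 2)) / n)
      Filter.atTop (nhds ((1 / 2) * Real.log (1 + μ ^ 2 / σ ^ 2))) := by
  have hid : Integrable (fun x : ℝ => x) P :=
    ((memLp_two_iff_integrable_sq aestronglyMeasurable_id).2 hL2).integrable one_le_two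
  have hS := strong_law_ae_comp hXm hiid hlaw (f := fun x => x) (by fun_prop) hid
  have hV := strong_law_ae_comp hXm hiid hlaw (f := fun x => x ^ 2) (by fun_prop) hL2
  rw [integral_sq_eq_add_sq_of_integral_sub_sq hL2 hmean hvar] at hV
  rw [hmean] at hS
  have hσ2 : 0 < σ ^ 2 := by positivity
  have hratio : (σ ^ 2 + μ ^ 2) / (σ ^ 2 + μ ^ 2 - μ ^ 2) = 1 + μ ^ 2 / σ ^ 2 := by
    field_simp
    ring
  filter_upwards [hS, hV] with ω hSω hVω
  rw [← hratio]
  exact tendsto_log_mul_rpow_div_atTop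
    (fun n => (Real.sqrt_pos.2 (by positivity)).ne') (tendsto_log_sqrt_div_add_div_atTop hc.ne')
    (tendsto_mul_div_mul_sub_sq _ hSω hVω (by linarith)) (hratio ▸ by positivity)

/-- E-power of the Gaussian-mixture scale-invariant t-test martingale: for i.i.d. data with
mean `μ` and variance `σ² > 0`, `(log G_n^{(c)})/n → (1/2) log(1+μ²/σ²)` a.s., where
`G_n^{(c)} = √(c²/(n+c²)) ((n+c²)V_n/((n+c²)V_n − S_n²))^{n/2}`. -/
theorem stmt_18 {Ω : Type*} {mΩ : MeasurableSpace Ω} (Pr : Measure Ω) [IsProbabilityMeasure Pr]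
    (P : Measure ℝ) [IsProbabilityMeasure P]
    (X : ℕ → Ω → ℝ) (hXm : ∀ i, Measurable (X i))
    (hiid : iIndepFun X Pr)
    (hlaw : ∀ i, Pr.map (X i) = P)
    (μ σ : ℝ) (hσ : 0 < σ)
    (hL2 : Integrable (fun x => x ^ 2) P)
    (hmean : ∫ x, x ∂P = μ) (hvar : ∫ x, (x - μ) ^ 2 ∂P = σ ^ 2)
    (c : ℝ) (hc : 0 < c) :
    ∀ᵐ ω ∂Pr, Filter.Tendsto (fun n : ℕ =>
        Real.log (Real.sqrt (c ^ 2 / (n + c ^ 2)) *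
          (((n + c ^ 2) * ∑ i ∈ Finset.range n, (X i ω) ^ 2) /
            ((n + c ^ 2) * (∑ i ∈ Finset.range n, (X i ω) ^ 2) -
              (∑ i ∈ Finset.range n, X i ω) ^ 2)) ^ ((n : ℝ) / 2)) / n)
      Filter.atTop (nhds ((1 / 2) * Real.log (1 + μ ^ 2 / σ ^ 2))) :=
  stmt_18_general (mΩ := mΩ) Pr P X hXm hiid hlaw μ σ hσ hL2 hmean hvar c hc
end

section
/- Let Φ denote the standard normal CDF and let a, b > 0. Define T_n = ∑_{i=1}^n 1{X_i > 0} − n/2 for i.i.d. X_i ~ N(μ, σ²) with σ > 0, and B_n^{(a,b)} = B(a + n/2 + T_n, b + n/2 − T_n) / (2^{−n}·B(a,b)) where B(·,·) is the Beta function. Then (log B_n^{(a,b)})/n → log(Φ(μ/σ)^{Φ(μ/σ)} · Φ(−μ/σ)^{Φ(−μ/σ)}) + log 2 almost surely as n → ∞. -/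
/-!
Writing `S_n` for the number of positive observations among the first `n`, the e-power equals
`2ⁿ Γ(a + S_n) Γ(b + n - S_n) Γ(a + b) / (Γ(a + b + n) Γ(a) Γ(b))`. Comparing
`log Γ(c + m) - log Γ(c) = ∑_{k < m} log (c + k)` with `∫₀^m log (c + t) dt` gives
`log Γ(c + m) = m log m - m + O(log m)`, so when `S_n / n → p ∈ (0, 1)` the `n log n` terms
cancel and `(log B_n) / n → p log p + (1 - p) log (1 - p) + log 2`. The strong law of large
numbers gives `S_n / n → P(X > 0) = Φ(μ / σ)` almost surely.
-/

open Filter Finset Real Topology MeasureTheory ProbabilityTheory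

lemma log_Gamma_add_nat {c : ℝ} (hc : 0 < c) (m : ℕ) :
    log (Gamma (c + m)) = log (Gamma c) + ∑ k ∈ range m, log (c + k) :=
  BohrMollerup.f_add_nat_eq (f := log ∘ Gamma) (fun hy => by
    simp [Gamma_add_one hy.ne', log_mul hy.ne' (Gamma_pos_of_pos hy).ne', add_comm]) hc m

lemma integral_log_const_add (c x : ℝ) :
    ∫ t in (0 : ℝ)..x, log (c + t) = (c + x) * log (c + x) - c * log c - x := by
  rw [intervalIntegral.integral_comp_add_left log c, add_zero, integral_log]
  ring

lemma sum_range_log_add_le {c : ℝ} (hc : 0 < c) (m : ℕ) :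
    ∑ k ∈ range m, log (c + k) ≤ (c + m) * log (c + m) - c * log c - m := by
  rw [← integral_log_const_add]
  simpa using MonotoneOn.sum_le_integral (x₀ := 0) (a := m) (f := fun x => log (c + x))
    fun x hx y _ hxy => log_le_log (by linarith [hx.1]) (by linarith)

lemma le_sum_range_log_add {c : ℝ} (hc : 0 < c) (m : ℕ) :
    (c + m) * log (c + m) - c * log c - m ≤
      ∑ k ∈ range m, log (c + k) + log (c + m) - log c := by
  rw [← integral_log_const_add]
  have h := MonotoneOn.integral_le_sum (x₀ := 0) (a := m) (f := fun x => log (c + x))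
    fun x hx y _ hxy => log_le_log (by linarith [hx.1]) (by linarith)
  have hshift := sum_range_succ' (fun k : ℕ => log (c + k)) m
  rw [sum_range_succ] at hshift
  push_cast at hshift h
  simp only [zero_add, add_zero] at h hshift
  linarith

lemma tendsto_log_Gamma_add_nat_sub_mul_log_div {c α : ℝ} (hc : 0 < c) (hα : 0 < α)
    {m : ℕ → ℕ} (hm : Tendsto (fun n => (m n : ℝ) / n) atTop (𝓝 α)) :
    Tendsto (fun n => (log (Gamma (c + m n)) - m n * log n) / n) atTop
      (𝓝 (α * log α - α)) := by
  set u : ℕ → ℝ := fun n => (c + m n) / n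
  have hu : Tendsto u atTop (𝓝 α) := by
    simpa [u, add_div] using (tendsto_const_div_atTop_nhds_zero_nat c).add hm
  have hlogu : Tendsto (fun n => log (u n) / n) atTop (𝓝 0) :=
    (hu.log hα.ne').div_atTop tendsto_natCast_atTop_atTop
  have hlogn : Tendsto (fun n : ℕ => log n / n) atTop (𝓝 0) :=
    isLittleO_log_id_atTop.tendsto_div_nhds_zero.comp tendsto_natCast_atTop_atTop
  have hconst (C : ℝ) : Tendsto (fun n : ℕ => C / n) atTop (𝓝 0) :=
    tendsto_const_div_atTop_nhds_zero_nat C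
  set E : ℕ → ℝ := fun n =>
    log (Gamma (c + m n)) - ((c + m n) * log (c + m n) - c * log c - m n)
  have hE : Tendsto (fun n => E n / n) atTop (𝓝 0) := by
    have hlow := ((hconst (log (Gamma c) + log c)).sub hlogu).sub hlogn
    rw [sub_zero, sub_zero] at hlow
    refine tendsto_of_tendsto_of_tendsto_of_le_of_le' hlow (hconst (log (Gamma c))) ?_ ?_
    · filter_upwards [eventually_gt_atTop 0] with n hn
      have hn' : (0 : ℝ) < n := by exact_mod_cast hn
      have hlog : log (c + m n) = log (u n) + log n := by
        rw [← log_mul (by positivity) hn'.ne']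
        simp [u, hn'.ne']
      rw [← sub_div, ← sub_div]
      gcongr
      simp only [E, log_Gamma_add_nat hc]
      linarith [le_sum_range_log_add hc (m n)]
    · refine Eventually.of_forall fun n => ?_
      gcongr
      simp only [E, log_Gamma_add_nat hc]
      linarith [sum_range_log_add_le hc (m n)]
  -- with `u = (c + m) / n`, the quantity is `E / n + u log u + c log n / n - c log c / n - m / n`
  have hmain := ((((hE.add (hu.mul (hu.log hα.ne'))).add (hlogn.const_mul c)).sub
    (hconst (c * log c))).sub hm)
  rw [zero_add, mul_zero, add_zero, sub_zero] at hmain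
  refine hmain.congr' ?_
  filter_upwards [eventually_gt_atTop 0] with n hn
  have hn' : (0 : ℝ) < n := by exact_mod_cast hn
  have : log (u n) = log (c + m n) - log n := log_div (by positivity) hn'.ne'
  simp only [E, this, u]
  field_simp
  ring

lemma tendsto_log_betaBinomial_div {a b p : ℝ} (ha : 0 < a) (hb : 0 < b) (hp0 : 0 < p)
    (hp1 : p < 1) {s : ℕ → ℕ} (hs : ∀ n, s n ≤ n)
    (hlim : Tendsto (fun n => (s n : ℝ) / n) atTop (𝓝 p)) :
    Tendsto (fun n : ℕ =>
        log ((Gamma (a + s n) * Gamma (b + ((n : ℝ) - s n)) / Gamma (a + b + n)) /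
          ((2 : ℝ) ^ (-(n : ℝ)) * (Gamma a * Gamma b / Gamma (a + b)))) / n)
      atTop (𝓝 (p * log p + (1 - p) * log (1 - p) + log 2)) := by
  have hrest : Tendsto (fun n => ((n - s n : ℕ) : ℝ) / n) atTop (𝓝 (1 - p)) := by
    refine (tendsto_const_nhds.sub hlim).congr' ?_
    filter_upwards [eventually_gt_atTop 0] with n hn
    rw [Nat.cast_sub (hs n)]
    field_simp
  have hid : Tendsto (fun n => ((id n : ℕ) : ℝ) / n) atTop (𝓝 1) :=
    tendsto_const_nhds.congr' <| by
      filter_upwards [eventually_gt_atTop 0] with n hn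
      simp [(Nat.cast_pos.mpr hn).ne']
  have hA := tendsto_log_Gamma_add_nat_sub_mul_log_div ha hp0 hlim
  have hB := tendsto_log_Gamma_add_nat_sub_mul_log_div hb (sub_pos.mpr hp1) hrest
  have hAB := tendsto_log_Gamma_add_nat_sub_mul_log_div (add_pos ha hb) one_pos hid
  have hC := tendsto_const_div_atTop_nhds_zero_nat (log (Gamma a * Gamma b / Gamma (a + b)))
  have hlim := (((hA.add hB).sub hAB).add (tendsto_const_nhds (x := log 2))).sub hC
  refine (hlim.congr' ?_).trans_eq ?_
  · filter_upwards [eventually_gt_atTop 0] with n hn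
    have hsn : (s n : ℝ) ≤ n := by exact_mod_cast hs n
    have hbn : 0 < b + ((n : ℝ) - s n) := by linarith
    have hlog : log ((Gamma (a + s n) * Gamma (b + ((n : ℝ) - s n)) / Gamma (a + b + n)) /
          ((2 : ℝ) ^ (-(n : ℝ)) * (Gamma a * Gamma b / Gamma (a + b)))) =
        log (Gamma (a + s n)) + log (Gamma (b + ((n : ℝ) - s n))) - log (Gamma (a + b + n)) +
          n * log 2 - log (Gamma a * Gamma b / Gamma (a + b)) := by
      rw [log_div (by positivity) (by positivity), log_div (by positivity) (by positivity),
        log_mul (by positivity) (by positivity), log_mul (by positivity) (by positivity),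
        log_rpow two_pos]
      ring
    rw [hlog, Nat.cast_sub (hs n), id]
    field_simp
    ring
  · rw [log_one]
    congr 1
    ring

lemma gaussianReal_map_standardize {μ σ : ℝ} (hσ : 0 < σ) :
    (gaussianReal μ (σ ^ 2).toNNReal).map (fun x => (μ - x) / σ) = gaussianReal 0 1 := by
  have hcomp : (fun x => (μ - x) / σ) = (· / σ) ∘ (μ - ·) := rfl
  rw [hcomp, ← Measure.map_map (by fun_prop) (by fun_prop), gaussianReal_map_const_sub,
    gaussianReal_map_div_const, sub_self, zero_div]
  congr 1
  ext
  simp [sq_nonneg σ, hσ.ne']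

lemma gaussianReal_Ioi_zero {μ σ : ℝ} (hσ : 0 < σ) :
    gaussianReal μ (σ ^ 2).toNNReal (Set.Ioi 0) = gaussianReal 0 1 (Set.Iic (μ / σ)) := by
  have := nullSingletonClass_gaussianReal (μ := 0) one_ne_zero
  have hpre : (fun x => (μ - x) / σ) ⁻¹' Set.Iio (μ / σ) = Set.Ioi 0 := by
    ext x
    simp [div_lt_div_iff_of_pos_right hσ]
  rw [← measure_congr Iio_ae_eq_Iic, ← gaussianReal_map_standardize (μ := μ) hσ,
    Measure.map_apply (by fun_prop) measurableSet_Iio, hpre]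

lemma gaussianReal_Iic_neg (c : ℝ) :
    (gaussianReal 0 1 (Set.Iic (-c))).toReal = 1 - (gaussianReal 0 1 (Set.Iic c)).toReal := by
  have := nullSingletonClass_gaussianReal (μ := 0) one_ne_zero
  have hneg : gaussianReal 0 1 (Set.Iic (-c)) = gaussianReal 0 1 (Set.Iic c)ᶜ := by
    conv_lhs => rw [← neg_zero, ← gaussianReal_map_neg]
    have hpre : Neg.neg ⁻¹' Set.Iic (-c) = Set.Ici c := by
      ext x
      simp
    rw [Measure.map_apply measurable_neg measurableSet_Iic, hpre, Set.compl_Iic,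
      measure_congr Ioi_ae_eq_Ici]
  rw [hneg, ← measureReal_def, probReal_compl_eq_one_sub measurableSet_Iic, measureReal_def]

lemma gaussianReal_Iic_pos (μ : ℝ) {v : NNReal} (hv : v ≠ 0) (c : ℝ) :
    0 < (gaussianReal μ v (Set.Iic c)).toReal := by
  refine ENNReal.toReal_pos (fun h => ?_) (measure_ne_top _ _)
  simpa using gaussianReal_absolutelyContinuous' μ hv h

lemma ae_tendsto_card_filter_mem_div {Ω E : Type*} {mΩ : MeasurableSpace Ω} [MeasurableSpace E]
    {P : Measure Ω} [IsProbabilityMeasure P] {X : ℕ → Ω → E} (hXm : ∀ i, Measurable (X i))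
    (hindep : iIndepFun X P) {ν : Measure E} (hlaw : ∀ i, P.map (X i) = ν)
    {S : Set E} [DecidablePred (· ∈ S)] (hS : MeasurableSet S) :
    ∀ᵐ ω ∂P, Tendsto (fun n : ℕ => (#{i ∈ range n | X i ω ∈ S} : ℝ) / n) atTop
      (𝓝 (ν S).toReal) := by
  have hf : Measurable (S.indicator (1 : E → ℝ)) := measurable_one.indicator hS
  set Y : ℕ → Ω → ℝ := fun i => S.indicator 1 ∘ X i
  have hY : Pairwise fun i j => Y i ⟂ᵢ[P] Y j := fun i j hij =>
    (hindep.comp (fun _ => S.indicator 1) fun _ => hf).indepFun hij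
  have hident (i : ℕ) : IdentDistrib (Y i) (Y 0) P P :=
    ⟨(hf.comp (hXm i)).aemeasurable, (hf.comp (hXm 0)).aemeasurable, by
      rw [← Measure.map_map hf (hXm i), ← Measure.map_map hf (hXm 0), hlaw i, hlaw 0]⟩
  have hY0 : Y 0 = (X 0 ⁻¹' S).indicator 1 := rfl
  have hmean : P[Y 0] = (ν S).toReal := by
    rw [hY0, integral_indicator_one (hXm 0 hS), ← hlaw 0, Measure.map_apply (hXm 0) hS,
      measureReal_def]
  filter_upwards [strong_law_ae_real Y ((integrable_const 1).indicator (hXm 0 hS)) hY hident]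
    with ω hω
  rw [hmean] at hω
  refine hω.congr fun n => ?_
  rw [natCast_card_filter]
  simp only [Y, Function.comp_apply, Set.indicator_apply, Pi.one_apply]

/-- E-power of the beta-binomial mixture test supermartingale for the median: with
`Φ` the standard normal CDF, `T_n = ∑ 1{Xᵢ>0} − n/2` for i.i.d. `Xᵢ ~ N(μ,σ²)`, and
`B_n^{(a,b)} = B(a+n/2+T_n, b+n/2−T_n)/(2^{−n} B(a,b))` (with `B` the Beta function,
expressed via Gamma functions), one has
`(log B_n^{(a,b)})/n → log(Φ(μ/σ)^{Φ(μ/σ)} Φ(−μ/σ)^{Φ(−μ/σ)}) + log 2` a.s. -/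
theorem stmt_19 {Ω : Type*} {mΩ : MeasurableSpace Ω} (Pr : Measure Ω) [IsProbabilityMeasure Pr]
    (μ σ : ℝ) (hσ : 0 < σ)
    (X : ℕ → Ω → ℝ) (hXm : ∀ i, Measurable (X i))
    (hiid : iIndepFun X Pr)
    (hlaw : ∀ i, Pr.map (X i) = gaussianReal μ (Real.toNNReal (σ ^ 2)))
    (a b : ℝ) (ha : 0 < a) (hb : 0 < b) :
    ∀ᵐ ω ∂Pr, Filter.Tendsto (fun n : ℕ =>
        Real.log (
          (Real.Gamma (a + (n : ℝ) / 2 +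
                ((∑ i ∈ Finset.range n, if 0 < X i ω then (1 : ℝ) else 0) - (n : ℝ) / 2)) *
              Real.Gamma (b + (n : ℝ) / 2 -
                ((∑ i ∈ Finset.range n, if 0 < X i ω then (1 : ℝ) else 0) - (n : ℝ) / 2)) /
              Real.Gamma (a + b + (n : ℝ))) /
            ((2 : ℝ) ^ (-(n : ℝ)) * (Real.Gamma a * Real.Gamma b / Real.Gamma (a + b)))) / n)
      Filter.atTop (nhds (Real.log
        (((gaussianReal 0 1 (Set.Iic (μ / σ))).toReal ^
            (gaussianReal 0 1 (Set.Iic (μ / σ))).toReal) *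
          ((gaussianReal 0 1 (Set.Iic (-(μ / σ)))).toReal ^
            (gaussianReal 0 1 (Set.Iic (-(μ / σ)))).toReal)) + Real.log 2)) := by
  set p := (gaussianReal 0 1 (Set.Iic (μ / σ))).toReal
  have hp0 : 0 < p := gaussianReal_Iic_pos 0 one_ne_zero _
  have hq0 := gaussianReal_Iic_pos 0 one_ne_zero (-(μ / σ))
  rw [gaussianReal_Iic_neg] at hq0 ⊢
  rw [log_mul (rpow_pos_of_pos hp0 p).ne' (rpow_pos_of_pos hq0 _).ne', log_rpow hp0, log_rpow hq0]
  filter_upwards [ae_tendsto_card_filter_mem_div hXm hiid hlaw measurableSet_Ioi] with ω hω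
  rw [gaussianReal_Ioi_zero hσ] at hω
  have hcount (n : ℕ) : (∑ i ∈ range n, if 0 < X i ω then (1 : ℝ) else 0) =
      #{i ∈ range n | X i ω ∈ Set.Ioi 0} := by
    rw [natCast_card_filter]
    rfl
  have hcount_le (n : ℕ) : #{i ∈ range n | X i ω ∈ Set.Ioi 0} ≤ n :=
    (card_filter_le _ _).trans (card_range n).le
  refine (tendsto_log_betaBinomial_div ha hb hp0 (sub_pos.mp hq0) hcount_le hω).congr fun n => ?_
  rw [hcount]
  congr 6 <;> ring
end
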